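/- arXiv:math/0402076 — 2 statements merged into one kernel-verified Lean document; each statement's English description precedes it below -/
import Mathlib

section
/- Let V be an n-dimensional real vector space with nondegenerate symmetric bilinear form g, J an endomorphism with g-transpose J̄, and U an endomorphism satisfying g(Ux,y) = -g(x,Uy) for all x,y (g-skew-symmetric). Suppose J is nondegenerate with n distinct real eigenvalues, and X satisfies JX = λX with X ≠ 0. Then there exists Y ∈ V such that J̄Y = λY - UX. -/
/-!
Put `A = J - λ` and `Ā = J̄ - λ`, which are `g`-adjoint. For a nondegenerate form,
`range Ā = (ker A)ᗮ` by a dimension count. Since `J` has `dim V` distinct eigenvalues all its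
eigenspaces are lines, so `ker A = ℝ X`, and `U X ⊥ X` because `g (U X) X` is both symmetric
and skew in `X`. Hence `-U X ∈ range Ā`.
-/

open Module

namespace Module.End

variable {K V : Type*} [Field K] [AddCommGroup V] [Module K V]

theorem HasEigenvector.mem_range_sub_smul_one {f : End K V} {a μ : K} {v : V}
    (hv : f.HasEigenvector a v) (ha : a ≠ μ) : v ∈ LinearMap.range (f - μ • 1) := by
  refine ⟨(a - μ)⁻¹ • v, ?_⟩
  rw [map_smul, LinearMap.sub_apply, hv.apply_eq_smul, LinearMap.smul_apply, one_apply,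
    ← sub_smul, smul_smul, inv_mul_cancel₀ (sub_ne_zero.mpr ha), one_smul]

theorem finrank_eigenspace_le_one [FiniteDimensional K V] {f : End K V} {n : ℕ}
    (hdim : finrank K V = n) {lams : Fin n → K} (hinj : Function.Injective lams)
    (heig : ∀ i, f.HasEigenvalue (lams i)) (μ : K) :
    finrank K (f.eigenspace μ) ≤ 1 := by
  classical
  choose v hv using fun i => (heig i).exists_hasEigenvector
  have hli : LinearIndependent K fun i : {i // lams i ≠ μ} => v i :=
    (eigenvectors_linearIndependent' f lams hinj v hv).comp _ Subtype.val_injective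
  have hspan : Submodule.span K (Set.range fun i : {i // lams i ≠ μ} => v i) ≤
      LinearMap.range (f - μ • 1) :=
    Submodule.span_le.mpr <| Set.range_subset_iff.mpr fun i => (hv i).mem_range_sub_smul_one i.2
  have hrange : Fintype.card {i // lams i ≠ μ} ≤ finrank K (LinearMap.range (f - μ • 1)) :=
    (finrank_span_eq_card hli).symm.le.trans (Submodule.finrank_mono hspan)
  have hfiber : Fintype.card {i // lams i = μ} ≤ 1 :=
    Fintype.card_le_one_iff_subsingleton.mpr
      ⟨fun i j => Subtype.ext <| hinj <| i.2.trans j.2.symm⟩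
  have hcompl : Fintype.card {i // lams i ≠ μ} = n - Fintype.card {i // lams i = μ} := by
    rw [Fintype.card_subtype_compl, Fintype.card_fin]
  have hrn := LinearMap.finrank_range_add_finrank_ker (f - μ • 1)
  rw [eigenspace_def]
  omega

end Module.End

theorem LinearMap.IsAdjointPair.range_eq_orthogonal_ker {K V : Type*} [Field K] [AddCommGroup V]
    [Module K V] [FiniteDimensional K V] {g : LinearMap.BilinForm K V} (hg : g.Nondegenerate)
    {A B : Module.End K V} (h : IsAdjointPair g g A B) :
    LinearMap.range B = g.orthogonal (LinearMap.ker A) := by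
  have hrange : LinearMap.range B ≤ g.orthogonal (LinearMap.ker A) := by
    rintro - ⟨y, rfl⟩ x hx
    rw [← h, LinearMap.mem_ker.mp hx, map_zero, LinearMap.zero_apply]
  have hker : LinearMap.ker B ≤ g.orthogonal (LinearMap.range A) := by
    rintro y hy - ⟨x, rfl⟩
    rw [h, LinearMap.mem_ker.mp hy, map_zero]
  refine Submodule.eq_of_le_of_finrank_le hrange ?_
  have hkerB := Submodule.finrank_mono hker
  rw [g.finrank_orthogonal hg] at hkerB ⊢
  have hrnA := LinearMap.finrank_range_add_finrank_ker A
  have hrnB := LinearMap.finrank_range_add_finrank_ker B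
  omega

theorem LinearMap.BilinForm.IsSymm.apply_map_self_eq_zero {R M : Type*} [CommRing R]
    [AddCommGroup M] [Module R M] [NoZeroDivisors R] [CharZero R]
    {g : LinearMap.BilinForm R M} (hg : g.IsSymm) {U : Module.End R M}
    (hU : ∀ x y, g (U x) y = - g x (U y)) (x : M) : g x (U x) = 0 := by
  have := hU x x
  rw [hg.eq (U x) x] at this
  exact self_eq_neg.mp this

theorem stmt2_general {V : Type*} [AddCommGroup V] [Module ℝ V] [FiniteDimensional ℝ V]
    {n : ℕ} (hdim : Module.finrank ℝ V = n)
    (g : LinearMap.BilinForm ℝ V) (hsym : g.IsSymm) (hnd : g.Nondegenerate)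
    (J Jb U : V →ₗ[ℝ] V)
    (htr : ∀ x y, g (J x) y = g x (Jb y))
    (hU : ∀ x y, g (U x) y = - g x (U y))
    (lams : Fin n → ℝ) (hinj : Function.Injective lams)
    (heig : ∀ i, Module.End.HasEigenvalue J (lams i))
    (X : V) (hX : X ≠ 0) (lam : ℝ) (hJX : J X = lam • X) :
    ∃ Y : V, Jb Y = lam • Y - U X := by
  have hadj : LinearMap.IsAdjointPair g g ⇑(J - lam • 1) ⇑(Jb - lam • 1) :=
    LinearMap.IsAdjointPair.sub htr (LinearMap.isAdjointPair_one.smul lam)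
  have hker : LinearMap.ker (J - lam • 1) = ℝ ∙ X := by
    rw [← Module.End.eigenspace_def]
    have hle : ℝ ∙ X ≤ Module.End.eigenspace J lam :=
      (Submodule.span_singleton_le_iff_mem _ _).mpr (Module.End.mem_eigenspace_iff.mpr hJX)
    refine (Submodule.eq_of_le_of_finrank_le hle ?_).symm
    rw [finrank_span_singleton hX]
    exact Module.End.finrank_eigenspace_le_one hdim hinj heig lam
  have hUX : -U X ∈ LinearMap.range (Jb - lam • 1) := by
    rw [hadj.range_eq_orthogonal_ker hnd, hker]
    intro x hx
    obtain ⟨c, rfl⟩ := Submodule.mem_span_singleton.mp hx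
    simp [hsym.apply_map_self_eq_zero hU X]
  obtain ⟨Y, hY⟩ := hUX
  exact ⟨Y, by simpa [sub_eq_iff_eq_add, neg_add_eq_sub] using hY⟩

/-- With `J` invertible, having `n = dim V` distinct real
eigenvalues, `Jb` its `g`-transpose and `U` `g`-skew, if `J X = lam • X` with
`X ≠ 0` then there is `Y` with `Jb Y = lam • Y - U X`. -/
theorem stmt2 {V : Type*} [AddCommGroup V] [Module ℝ V] [FiniteDimensional ℝ V]
    {n : ℕ} (hdim : Module.finrank ℝ V = n)
    (g : LinearMap.BilinForm ℝ V) (hsym : g.IsSymm) (hnd : g.Nondegenerate)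
    (J Jb U : V →ₗ[ℝ] V)
    (hJinv : Function.Bijective J)
    (htr : ∀ x y, g (J x) y = g x (Jb y))
    (hU : ∀ x y, g (U x) y = - g x (U y))
    (lams : Fin n → ℝ) (hinj : Function.Injective lams)
    (heig : ∀ i, Module.End.HasEigenvalue J (lams i))
    (X : V) (hX : X ≠ 0) (lam : ℝ) (hJX : J X = lam • X) :
    ∃ Y : V, Jb Y = lam • Y - U X :=
  stmt2_general hdim g hsym hnd J Jb U htr hU lams hinj heig X hX lam hJX
end

section
/- Let J be an endomorphism of an n-dimensional real vector space that is diagonalizable with n distinct eigenvalues λ₁,...,λₙ, with eigenvectors X₁,...,Xₙ; let J̄ be another endomorphism with the same n distinct eigenvalues, with eigenvectors Z₁,...,Zₙ; and let U be any linear map such that for each i there exists Yᵢ with J̄Yᵢ = λᵢYᵢ - UXᵢ. Then the 2n vectors {(0,Zᵢ)} ∪ {(Xᵢ,Yᵢ)} form a basis of V × V consisting of eigenvectors of R(x,y) = (Jx, Ux + J̄y), so R is diagonalizable with eigenvalues λ₁,...,λₙ each of multiplicity 2. -/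
/-!
With `L` the linear map sending `X i` to `Y i`, the family `(0, Z k)`, `(X i, Y i)` is the image of
the product basis `(X i, 0)`, `(0, Z k)` under the shear `(x, y) ↦ (x, L x + y)`, a linear
automorphism of `V × V`; hence it is a basis. The eigenvector equations are direct computations,
the one for `(X i, Y i)` being exactly the defining relation of `Y i`.
-/

namespace Module.Basis

variable {ι κ R M N : Type*} [CommSemiring R] [AddCommMonoid M] [AddCommGroup N]
  [Module R M] [Module R N]

noncomputable def skewProd (X : Basis ι R M) (Z : Basis κ R N) (Y : ι → N) :
    Basis (κ ⊕ ι) R (M × N) :=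
  ((X.prod Z).map ((LinearEquiv.refl R M).skewProd (.refl R N) (X.constr R Y))).reindex
    (Equiv.sumComm ι κ)

theorem coe_skewProd (X : Basis ι R M) (Z : Basis κ R N) (Y : ι → N) :
    ⇑(X.skewProd Z Y) = Sum.elim (fun k => ((0 : M), Z k)) (fun i => (X i, Y i)) := by
  funext j
  cases j <;>
    simp [skewProd, LinearEquiv.skewProd_apply, prod_apply, constr_basis]

end Module.Basis

theorem stmt19_general {V : Type*} [AddCommGroup V] [Module ℝ V]
    {n : ℕ}
    (J Jb U : V →ₗ[ℝ] V) (lam : Fin n → ℝ)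
    (X : Module.Basis (Fin n) ℝ V) (hX : ∀ i, J (X i) = lam i • X i)
    (Z : Module.Basis (Fin n) ℝ V) (hZ : ∀ i, Jb (Z i) = lam i • Z i)
    (Y : Fin n → V) (hY : ∀ i, Jb (Y i) = lam i • Y i - U (X i))
    (R : V × V →ₗ[ℝ] V × V)
    (hR : ∀ x y : V, R (x, y) = (J x, U x + Jb y)) :
    let b : (Fin n ⊕ Fin n) → V × V :=
      fun i => Sum.elim (fun i => ((0 : V), Z i)) (fun i => (X i, Y i)) i
    LinearIndependent ℝ b ∧ Submodule.span ℝ (Set.range b) = ⊤ ∧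
      (∀ i, R (0, Z i) = lam i • ((0 : V), Z i)) ∧
      (∀ i, R (X i, Y i) = lam i • (X i, Y i)) := by
  intro b
  have hb : b = ⇑(X.skewProd Z Y) := (X.coe_skewProd Z Y).symm
  refine ⟨hb ▸ (X.skewProd Z Y).linearIndependent, hb ▸ (X.skewProd Z Y).span_eq, ?_, ?_⟩
  · intro i
    simp [hR, hZ i, Prod.smul_def]
  · intro i
    simp [hR, hX i, hY i, Prod.smul_def]

/-- If `J` has eigenbasis `X i` with pairwise distinct eigenvalues
`lam i`, `Jb` has eigenbasis `Z i` for the same eigenvalues, and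
`Jb (Y i) = lam i • Y i - U (X i)`, then the `2n` vectors `(0, Z i)` and
`(X i, Y i)` form a basis of `V × V` consisting of eigenvectors of
`R (x,y) = (J x, U x + Jb y)`; in particular `R` is diagonalizable with each
`lam i` of multiplicity 2. -/
theorem stmt19 {V : Type*} [AddCommGroup V] [Module ℝ V] [FiniteDimensional ℝ V]
    {n : ℕ} (hdim : Module.finrank ℝ V = n)
    (J Jb U : V →ₗ[ℝ] V) (lam : Fin n → ℝ) (hinj : Function.Injective lam)
    (X : Module.Basis (Fin n) ℝ V) (hX : ∀ i, J (X i) = lam i • X i)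
    (Z : Module.Basis (Fin n) ℝ V) (hZ : ∀ i, Jb (Z i) = lam i • Z i)
    (Y : Fin n → V) (hY : ∀ i, Jb (Y i) = lam i • Y i - U (X i))
    (R : V × V →ₗ[ℝ] V × V)
    (hR : ∀ x y : V, R (x, y) = (J x, U x + Jb y)) :
    let b : (Fin n ⊕ Fin n) → V × V :=
      fun i => Sum.elim (fun i => ((0 : V), Z i)) (fun i => (X i, Y i)) i
    LinearIndependent ℝ b ∧ Submodule.span ℝ (Set.range b) = ⊤ ∧
      (∀ i, R (0, Z i) = lam i • ((0 : V), Z i)) ∧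
      (∀ i, R (X i, Y i) = lam i • (X i, Y i)) :=
  stmt19_general J Jb U lam X hX Z hZ Y hY R hR
end
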